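/- Let B be an n×n real constant row-sum matrix whose characteristic polynomial (over ℂ) has roots λ₁, λ₂, …, λ_n counted with multiplicity, where Be = λ₁e and the remaining roots are ordered so that |λ₂| ≤ |λ₃| ≤ ⋯ ≤ |λ_n|. Then for every p ∈ ℕ ∪ {∞} with p ≥ 1, lim_{k→∞} (τ_p(B^k))^{1/k} = |λ_n|. -/

import Mathlib

open Matrix
open scoped ENNReal

/-- Non-increasing (descending) sort of a list of reals. -/
noncomputable def sortDesc (l : List ℝ) : List ℝ := (l.insertionSort (· ≤ ·)).reverse

/-- Given the descending rearrangement `l` of `n` numbers, the sum of the largest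
(about) half minus the sum of the smallest (about) half, skipping the middle
element when `n` is odd. -/
noncomputable def halfSumDiff (n : ℕ) (l : List ℝ) : ℝ :=
  if n % 2 = 1 then (l.take ((n - 1) / 2)).sum - (l.drop ((n + 1) / 2)).sum
  else (l.take (n / 2)).sum - (l.drop (n / 2)).sum

/-- Radius of the `i`-th Gershgorin disc of the second type of `M`, computed from
the `i`-th row of `M` with the diagonal entry replaced by `0`. -/
noncomputable def secondTypeRadius {n : ℕ} (M : Matrix (Fin n) (Fin n) ℝ) (i : Fin n) : ℝ :=
  halfSumDiff n (sortDesc (List.ofFn fun j : Fin n => if j = i then 0 else M i j))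

/-- The `i`-th Gershgorin disc of the second type of `M`. -/
noncomputable def secondTypeDisc {n : ℕ} (M : Matrix (Fin n) (Fin n) ℝ) (i : Fin n) : Set ℂ :=
  Metric.closedBall ((M i i : ℝ) : ℂ) (secondTypeRadius M i)

/-- The Gershgorin region of the second type of `M`. -/
noncomputable def secondTypeRegion {n : ℕ} (M : Matrix (Fin n) (Fin n) ℝ) : Set ℂ :=
  ⋃ i : Fin n, secondTypeDisc M i

/-- `μ` is a (complex) eigenvalue of the real matrix `A`, i.e. a complex root of
its characteristic polynomial. -/
def IsEigenvalueC {n : ℕ} (A : Matrix (Fin n) (Fin n) ℝ) (μ : ℂ) : Prop :=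
  ((A.map ((↑) : ℝ → ℂ)).charpoly).IsRoot μ

/-- The `k`-th largest element (1-indexed) among the `n - 1` off-diagonal entries of
column `j` of `B`. -/
noncomputable def kthLargestOffDiag {n : ℕ} (B : Matrix (Fin n) (Fin n) ℝ) (j : Fin n)
    (k : ℕ) : ℝ :=
  (sortDesc (((List.ofFn fun i : Fin n => B i j).eraseIdx j.val))).getD (k - 1) 0

/-- The ℓ_p norm of a vector in ℝ^n. -/
noncomputable def lpNorm {n : ℕ} (p : ℝ≥0∞) (x : Fin n → ℝ) : ℝ :=
  @norm (PiLp p fun _ : Fin n => ℝ) _ ((WithLp.equiv p (∀ _ : Fin n, ℝ)).symm x)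

/-- The seminorm-like quantity `τ_p(B)`: the supremum of `‖Bᵀ x‖_p` over all real
vectors `x` with `xᵀ e = 0` and `‖x‖_p = 1`. -/
noncomputable def tau {n : ℕ} (p : ℝ≥0∞) (B : Matrix (Fin n) (Fin n) ℝ) : ℝ :=
  sSup { t : ℝ | ∃ x : Fin n → ℝ, (∑ i, x i) = 0 ∧ lpNorm p x = 1 ∧ t = lpNorm p (Bᵀ *ᵥ x) }

/-- The Ostrowski–Brauer set `Γ(M)` of a real square matrix `M`. -/
noncomputable def brauerSet {n : ℕ} (M : Matrix (Fin n) (Fin n) ℝ) : Set ℂ :=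
  ⋃ (i : Fin n) (j : Fin n) (_ : i < j),
    { y : ℂ | ‖y - (M i i : ℝ)‖ * ‖y - (M j j : ℝ)‖ ≤
        (∑ k ∈ Finset.univ.filter fun k => k ≠ i, |M i k|) *
        (∑ k ∈ Finset.univ.filter fun k => k ≠ j, |M j k|) }

/-- `cs_j(A)` from Definition 2.3: sorted column sums difference. -/
noncomputable def csCol {n : ℕ} (A : Matrix (Fin n) (Fin n) ℝ) (j : Fin n) : ℝ :=
  halfSumDiff n (sortDesc (List.ofFn fun i : Fin n => A i j))

/-!
Let `P = I - J/n` be the projection onto `W = {x | ∑ i, x i = 0}`. Since `Bᵀ` maps `W` into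
itself, `(Bᵀ P)^k = (Bᵀ)^k P` for `k ≥ 1`, and `τ_p(B^k)`, the `ℓ_p`-norm of `(Bᵀ)^k` restricted
to `W`, is within constant factors (independent of `k`) of `‖(Bᵀ P)^k‖`. Gelfand's formula gives
`‖(Bᵀ P)^k‖^(1/k) → ρ(Bᵀ P)`, and by Brauer's theorem the spectrum of `Bᵀ P` is that of `B`
with `λ₁` replaced by `0`, so `ρ(Bᵀ P) = |λ_n|`.
-/

open Polynomial Filter Asymptotics
open scoped Topology NNReal Matrix.Norms.Operator

lemma tendsto_rpow_one_div_of_isTheta {f g : ℕ → ℝ} {r : ℝ} (hfg : f =Θ[atTop] g)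
    (hf : ∀ k, 0 ≤ f k) (hg : ∀ k, 0 ≤ g k)
    (h : Tendsto (fun k : ℕ => g k ^ ((1 : ℝ) / k)) atTop (𝓝 r)) :
    Tendsto (fun k : ℕ => f k ^ ((1 : ℝ) / k)) atTop (𝓝 r) := by
  have hroot : ∀ {c : ℝ}, 0 < c → Tendsto (fun k : ℕ => c ^ ((1 : ℝ) / k)) atTop (𝓝 1) :=
    fun hc => by
      have := ((Real.continuousAt_const_rpow hc.ne').tendsto).comp
        tendsto_one_div_atTop_nhds_zero_nat
      rwa [Real.rpow_zero] at this
  obtain ⟨c, hc, hfO⟩ := hfg.1.exists_pos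
  obtain ⟨c', hc', hgO⟩ := hfg.2.exists_pos
  have hup := (hroot hc).mul h
  have hlow := h.div (hroot hc') one_ne_zero
  rw [one_mul] at hup
  rw [div_one] at hlow
  refine tendsto_of_tendsto_of_tendsto_of_le_of_le' hlow hup ?_ ?_
  · filter_upwards [hgO.bound] with k hk
    simp only [Real.norm_of_nonneg (hf k), Real.norm_of_nonneg (hg k)] at hk
    rw [Pi.div_apply, div_le_iff₀ (by positivity), ← Real.mul_rpow (hf k) hc'.le, mul_comm (f k)]
    exact Real.rpow_le_rpow (hg k) hk (by positivity)
  · filter_upwards [hfO.bound] with k hk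
    simp only [Real.norm_of_nonneg (hf k), Real.norm_of_nonneg (hg k)] at hk
    rw [← Real.mul_rpow hc.le (hg k)]
    exact Real.rpow_le_rpow (hf k) hk (by positivity)

section LpNorm
variable {n : ℕ} {p : ℝ≥0∞}

lemma lpNorm_eq_norm_toLp (x : Fin n → ℝ) : lpNorm p x = ‖WithLp.toLp p x‖ := rfl

lemma lpNorm_nonneg (hp : 1 ≤ p) (x : Fin n → ℝ) : 0 ≤ lpNorm p x :=
  have : Fact (1 ≤ p) := ⟨hp⟩
  norm_nonneg _

lemma lpNorm_smul (hp : 1 ≤ p) (c : ℝ) (x : Fin n → ℝ) :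
    lpNorm p (c • x) = |c| * lpNorm p x :=
  have : Fact (1 ≤ p) := ⟨hp⟩
  norm_smul c (WithLp.toLp p x)

lemma norm_le_lpNorm (hp : 1 ≤ p) (x : Fin n → ℝ) : ‖x‖ ≤ lpNorm p x := by
  have : Fact (1 ≤ p) := ⟨hp⟩
  refine (pi_norm_le_iff_of_nonneg (lpNorm_nonneg hp x)).2 fun i => ?_
  exact PiLp.norm_apply_le (WithLp.toLp p x) i

lemma lpNorm_le_mul_norm (hp : 1 ≤ p) (x : Fin n → ℝ) : lpNorm p x ≤ n * ‖x‖ := by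
  have : Fact (1 ≤ p) := ⟨hp⟩
  have hx : WithLp.toLp p x = ∑ i, PiLp.single p i (x i) := by
    rw [← Finset.univ_sum_single x, WithLp.toLp_sum]
    simp only [Finset.univ_sum_single]
    rfl
  calc lpNorm p x = ‖∑ i, PiLp.single p i (x i)‖ := by rw [lpNorm_eq_norm_toLp, hx]
    _ ≤ ∑ i, ‖x i‖ := (norm_sum_le _ _).trans_eq (by simp only [PiLp.norm_single])
    _ ≤ ∑ _i : Fin n, ‖x‖ := Finset.sum_le_sum fun i _ => norm_le_pi_norm x i
    _ = n * ‖x‖ := by simp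

end LpNorm

lemma sum_transpose_mulVec {ι α : Type*} [Fintype ι] [CommSemiring α] {B : Matrix ι ι α} {μ : α}
    (hB : B *ᵥ 1 = μ • 1) (x : ι → α) : ∑ i, (Bᵀ *ᵥ x) i = μ * ∑ i, x i := by
  have h := dotProduct_mulVec x B 1
  rw [hB, dotProduct_smul, ← mulVec_transpose] at h
  simpa [dotProduct, smul_eq_mul] using h.symm

noncomputable def centering (n : ℕ) : Matrix (Fin n) (Fin n) ℝ := 1 - Matrix.of fun _ _ => (n : ℝ)⁻¹

section Centering
variable {n : ℕ}

lemma centering_transpose : (centering n)ᵀ = centering n := by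
  ext i j
  simp [centering, one_apply, eq_comm]

lemma centering_mulVec (x : Fin n → ℝ) :
    centering n *ᵥ x = x - fun _ => (n : ℝ)⁻¹ * ∑ i, x i := by
  rw [centering, sub_mulVec, one_mulVec]
  ext i
  simp [mulVec, dotProduct, Finset.mul_sum]

lemma sum_centering_mulVec (x : Fin n → ℝ) : ∑ i, (centering n *ᵥ x) i = 0 := by
  rcases Nat.eq_zero_or_pos n with rfl | hn
  · simp
  · simp only [centering_mulVec, Pi.sub_apply, Finset.sum_sub_distrib, Finset.sum_const,
      Finset.card_univ, Fintype.card_fin, nsmul_eq_mul]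
    field_simp
    ring

lemma centering_mulVec_of_sum_eq_zero {x : Fin n → ℝ} (hx : ∑ i, x i = 0) :
    centering n *ᵥ x = x := by
  rw [centering_mulVec, hx, mul_zero]
  exact sub_zero x

lemma transpose_mul_centering_pow_succ {B : Matrix (Fin n) (Fin n) ℝ} {μ : ℝ}
    (hB : B *ᵥ 1 = μ • 1) (k : ℕ) :
    (Bᵀ * centering n) ^ (k + 1) = Bᵀ ^ (k + 1) * centering n := by
  have hfix : centering n * (Bᵀ * centering n) = Bᵀ * centering n := by
    refine ext_iff_mulVec.2 fun x => ?_
    simp only [← mulVec_mulVec]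
    refine centering_mulVec_of_sum_eq_zero ?_
    rw [sum_transpose_mulVec hB, sum_centering_mulVec, mul_zero]
  induction k with
  | zero => simp
  | succ k ih => rw [pow_succ, ih, mul_assoc, hfix, ← mul_assoc, ← pow_succ]

end Centering

section Tau
variable {n : ℕ} {p : ℝ≥0∞}

lemma lpNorm_mulVec_le (hp : 1 ≤ p) (N : Matrix (Fin n) (Fin n) ℝ) (x : Fin n → ℝ) :
    lpNorm p (N *ᵥ x) ≤ n * ‖N‖ * lpNorm p x :=
  calc lpNorm p (N *ᵥ x) ≤ n * ‖N *ᵥ x‖ := lpNorm_le_mul_norm hp _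
    _ ≤ n * (‖N‖ * lpNorm p x) := by
        gcongr
        exact (linfty_opNorm_mulVec N x).trans (by gcongr; exact norm_le_lpNorm hp x)
    _ = n * ‖N‖ * lpNorm p x := by ring

lemma tau_nonneg (hp : 1 ≤ p) (M : Matrix (Fin n) (Fin n) ℝ) : 0 ≤ tau p M :=
  Real.sSup_nonneg fun _ ⟨_, _, _, ht⟩ => ht ▸ lpNorm_nonneg hp _

lemma lpNorm_transpose_mulVec_le_tau_mul (hp : 1 ≤ p) (M : Matrix (Fin n) (Fin n) ℝ)
    {x : Fin n → ℝ} (hx : ∑ i, x i = 0) :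
    lpNorm p (Mᵀ *ᵥ x) ≤ tau p M * lpNorm p x := by
  rcases (lpNorm_nonneg hp x).eq_or_lt with h0 | hpos
  · simpa [← h0] using lpNorm_mulVec_le hp Mᵀ x
  have hbdd : BddAbove {t : ℝ | ∃ x : Fin n → ℝ, (∑ i, x i) = 0 ∧ lpNorm p x = 1 ∧
      t = lpNorm p (Mᵀ *ᵥ x)} := by
    refine ⟨n * ‖Mᵀ‖, ?_⟩
    rintro _ ⟨y, -, hy, rfl⟩
    simpa [hy] using lpNorm_mulVec_le hp Mᵀ y
  have hunit : lpNorm p ((lpNorm p x)⁻¹ • x) = 1 := by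
    rw [lpNorm_smul hp, abs_inv, abs_of_pos hpos, inv_mul_cancel₀ hpos.ne']
  have hmem := le_csSup hbdd ⟨_, by simp [← Finset.mul_sum, hx], hunit, rfl⟩
  rw [mulVec_smul, lpNorm_smul hp, abs_inv, abs_of_pos hpos, inv_mul_le_iff₀ hpos] at hmem
  rwa [mul_comm] at hmem

lemma tau_le_mul_norm_transpose_mul_centering (hp : 1 ≤ p) (M : Matrix (Fin n) (Fin n) ℝ) :
    tau p M ≤ n * ‖Mᵀ * centering n‖ := by
  refine Real.sSup_le ?_ (by positivity)
  rintro _ ⟨x, hx, hx1, rfl⟩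
  simpa [← mulVec_mulVec, centering_mulVec_of_sum_eq_zero hx, hx1] using
    lpNorm_mulVec_le hp (Mᵀ * centering n) x

lemma norm_transpose_mul_centering_le_mul_tau (hp : 1 ≤ p) (M : Matrix (Fin n) (Fin n) ℝ) :
    ‖Mᵀ * centering n‖ ≤ n * ‖centering n‖ * tau p M := by
  rw [linfty_opNorm_eq_opNorm]
  refine ContinuousLinearMap.opNorm_le_bound _ (by have := tau_nonneg hp M; positivity) fun y => ?_
  change ‖(Mᵀ * centering n) *ᵥ y‖ ≤ _
  rw [← mulVec_mulVec]
  calc ‖Mᵀ *ᵥ (centering n *ᵥ y)‖ ≤ lpNorm p (Mᵀ *ᵥ (centering n *ᵥ y)) := norm_le_lpNorm hp _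
    _ ≤ tau p M * lpNorm p (centering n *ᵥ y) :=
        lpNorm_transpose_mulVec_le_tau_mul hp M (sum_centering_mulVec y)
    _ ≤ tau p M * (n * (‖centering n‖ * ‖y‖)) := by
        have := tau_nonneg hp M
        gcongr
        exact (lpNorm_le_mul_norm hp _).trans (by gcongr; exact linfty_opNorm_mulVec _ _)
    _ = n * ‖centering n‖ * tau p M * ‖y‖ := by ring

lemma tau_pow_isTheta (hp : 1 ≤ p) {B : Matrix (Fin n) (Fin n) ℝ} {μ : ℝ}
    (hB : B *ᵥ 1 = μ • 1) :
    (fun k => tau p (B ^ k)) =Θ[atTop] fun k => ‖(Bᵀ * centering n) ^ k‖ := by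
  have hpow : ∀ᶠ k in atTop, (Bᵀ * centering n) ^ k = (B ^ k)ᵀ * centering n := by
    filter_upwards [eventually_ge_atTop 1] with k hk
    obtain ⟨k, rfl⟩ := Nat.exists_eq_add_of_le' hk
    rw [transpose_pow, transpose_mul_centering_pow_succ hB]
  constructor
  · refine IsBigO.of_bound n ?_
    filter_upwards [hpow] with k hk
    rw [Real.norm_of_nonneg (tau_nonneg hp _), norm_norm, hk]
    exact tau_le_mul_norm_transpose_mul_centering hp _
  · refine IsBigO.of_bound (n * ‖centering n‖) ?_
    filter_upwards [hpow] with k hk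
    rw [Real.norm_of_nonneg (tau_nonneg hp _), norm_norm, hk]
    exact norm_transpose_mul_centering_le_mul_tau hp _

end Tau

section Brauer
variable {ι K : Type*} [Fintype ι] [DecidableEq ι] [Field K]

lemma det_add_vecMulVec_of_mulVec_eq_smul {A : Matrix ι ι K} (hA : IsUnit A.det)
    {u : ι → K} {c : K} (hu : A *ᵥ u = c • u) (v : ι → K) :
    c * (A + vecMulVec u v).det = A.det * (c + v ⬝ᵥ u) := by
  have hinv : c • (A⁻¹ *ᵥ u) = u := by
    rw [← mulVec_smul, ← hu, mulVec_mulVec, nonsing_inv_mul _ hA, one_mulVec]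
  have hdet : (1 + replicateRow Unit v * A⁻¹ * replicateCol Unit u).det = 1 + v ⬝ᵥ (A⁻¹ *ᵥ u) := by
    rw [det_unique]
    simp only [PUnit.default_eq_unit, Matrix.add_apply, one_apply_eq, Matrix.mul_apply,
      replicateRow_apply, replicateCol_apply, Finset.sum_mul, mul_assoc, dotProduct, mulVec,
      Finset.mul_sum, add_right_inj]
    exact Finset.sum_comm
  rw [vecMulVec_eq Unit, det_add_replicateCol_mul_replicateRow hA, hdet]
  conv_rhs => rw [← hinv, dotProduct_smul, smul_eq_mul]
  ring

/-- Brauer's theorem on rank-one perturbations. -/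
theorem charpoly_sub_vecMulVec_of_mulVec_eq_smul [Infinite K] {M : Matrix ι ι K} {u : ι → K}
    {μ : K} (hu : M *ᵥ u = μ • u) (v : ι → K) :
    (X - C μ) * (M - vecMulVec u v).charpoly = (X - C (μ - v ⬝ᵥ u)) * M.charpoly := by
  apply eq_of_infinite_eval_eq
  refine (finite_setOfPred_isRoot M.charpoly_monic.ne_zero).infinite_compl.mono fun t ht => ?_
  have hA : IsUnit (scalar ι t - M).det := by
    simpa [IsRoot, eval_charpoly] using ht
  have hAu : (scalar ι t - M) *ᵥ u = (t - μ) • u := by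
    ext i
    simp [sub_mulVec, hu, scalar_apply, sub_mul]
  have key := det_add_vecMulVec_of_mulVec_eq_smul hA hAu v
  simp only [Set.mem_ofPred_eq, eval_mul, eval_sub, eval_X, eval_C, eval_charpoly]
  rw [← sub_add, key]
  ring

end Brauer

lemma charpoly_transpose_mul_centering {n : ℕ} (hn : 0 < n) {B : Matrix (Fin n) (Fin n) ℝ}
    {μ : ℝ} (hB : B *ᵥ 1 = μ • 1) :
    (X - C μ) * (Bᵀ * centering n).charpoly = X * B.charpoly := by
  have hrow : ∀ i, ∑ j, B i j = μ := fun i => by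
    simpa [mulVec, dotProduct] using congrFun hB i
  have hmul : B * centering n = B - vecMulVec 1 fun _ => μ * (n : ℝ)⁻¹ := by
    ext i j
    simp [centering, Matrix.mul_apply, mul_sub, Finset.sum_sub_distrib, ← Finset.sum_mul, hrow,
      one_apply]
  have hdot : ((fun _ => μ * (n : ℝ)⁻¹) ⬝ᵥ (1 : Fin n → ℝ)) = μ := by
    simp only [dotProduct, Pi.one_apply, mul_one, Finset.sum_const, Finset.card_univ,
      Fintype.card_fin, nsmul_eq_mul]
    field_simp
  rw [← charpoly_transpose, transpose_mul, transpose_transpose, centering_transpose,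
    charpoly_mul_comm, hmul, charpoly_sub_vecMulVec_of_mulVec_eq_smul hB, hdot, sub_self,
    map_zero, sub_zero]

lemma spectralRadius_eq_of_mem_roots_charpoly {ι : Type*} [Fintype ι] [DecidableEq ι]
    {A : Matrix ι ι ℂ} {μ₀ : ℂ} (h₀ : μ₀ ∈ A.charpoly.roots)
    (hle : ∀ μ ∈ A.charpoly.roots, ‖μ‖ ≤ ‖μ₀‖) : spectralRadius ℂ A = ‖μ₀‖₊ := by
  have hmem : ∀ μ, μ ∈ spectrum ℂ A ↔ μ ∈ A.charpoly.roots := fun μ => by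
    rw [mem_spectrum_iff_isRoot_charpoly, mem_roots A.charpoly_monic.ne_zero]
  refine le_antisymm (iSup₂_le fun μ hμ => ?_) (le_iSup₂ (f := fun μ _ => (‖μ‖₊ : ℝ≥0∞)) μ₀
    ((hmem μ₀).2 h₀))
  exact ENNReal.coe_le_coe.2 (hle μ ((hmem μ).1 hμ))

lemma linfty_opNorm_map_ofReal {ι : Type*} [Fintype ι] (A : Matrix ι ι ℝ) :
    ‖A.map ((↑) : ℝ → ℂ)‖ = ‖A‖ := by
  simp [linfty_opNorm_def, Complex.nnnorm_real]

lemma tendsto_norm_pow_rpow_one_div_of_spectralRadius_eq {ι : Type*} [Fintype ι]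
    [DecidableEq ι] (A : Matrix ι ι ℝ) {r : ℝ≥0}
    (hr : spectralRadius ℂ (A.map ((↑) : ℝ → ℂ)) = r) :
    Tendsto (fun k : ℕ => ‖A ^ k‖ ^ ((1 : ℝ) / k)) atTop (𝓝 r) := by
  have h := spectrum.pow_norm_pow_one_div_tendsto_nhds_spectralRadius (A.map ((↑) : ℝ → ℂ))
  rw [hr] at h
  refine ((ENNReal.tendsto_toReal ENNReal.coe_ne_top).comp h).congr fun k => ?_
  rw [Function.comp_apply, ENNReal.toReal_ofReal (by positivity), ← linfty_opNorm_map_ofReal]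
  congr 2
  exact (Matrix.map_pow A Complex.ofRealHom k).symm

lemma roots_charpoly_map_transpose_mul_centering {n : ℕ} {B : Matrix (Fin n) (Fin n) ℝ}
    {lam : Fin n → ℂ}
    (hroots : ((B.map ((↑) : ℝ → ℂ)).charpoly).roots = Finset.univ.val.map lam)
    {μ : ℝ} (hB : B *ᵥ 1 = μ • 1) {i₀ : Fin n} (hi₀ : lam i₀ = μ) :
    (((Bᵀ * centering n).map ((↑) : ℝ → ℂ)).charpoly).roots =
      0 ::ₘ (Finset.univ.val.erase i₀).map lam := by
  have h := congrArg (Polynomial.map Complex.ofRealHom)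
    (charpoly_transpose_mul_centering i₀.pos hB)
  simp only [Polynomial.map_mul, Polynomial.map_sub, map_X, map_C, ← charpoly_map,
    Complex.ofRealHom_eq_coe] at h
  have hne : (X - C (μ : ℂ)) * ((Bᵀ * centering n).map Complex.ofRealHom).charpoly ≠ 0 :=
    ((monic_X_sub_C _).mul (charpoly_monic _)).ne_zero
  have hroots' := congrArg roots h
  rw [roots_mul hne, roots_mul (h ▸ hne), roots_X_sub_C, roots_X] at hroots'
  change _ = _ + (B.map ((↑) : ℝ → ℂ)).charpoly.roots at hroots'
  rw [hroots, ← Multiset.cons_erase (Finset.mem_univ_val i₀), Multiset.map_cons, hi₀,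
    Multiset.singleton_add, Multiset.singleton_add, Multiset.cons_swap,
    Multiset.cons_inj_right] at hroots'
  exact hroots'

/-- equation (15): for a constant row-sum matrix `B` with eigenvalues
`λ₁, …, λ_n` (with `B e = λ₁ e` and `|λ₂| ≤ ⋯ ≤ |λ_n|`),
`lim_{k→∞} (τ_p(B^k))^{1/k} = |λ_n|`. -/
theorem stmt16 {n : ℕ} (hn : 2 ≤ n) (B : Matrix (Fin n) (Fin n) ℝ)
    (lam : Fin n → ℂ)
    (hroots : ((B.map ((↑) : ℝ → ℂ)).charpoly).roots = Finset.univ.val.map lam)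
    (lam1 : ℝ) (hB : B *ᵥ (1 : Fin n → ℝ) = lam1 • (1 : Fin n → ℝ))
    (hlam1 : lam ⟨0, by omega⟩ = (lam1 : ℂ))
    (hmono : ∀ i j : Fin n, 0 < i.val → i ≤ j →
      ‖lam i‖ ≤ ‖lam j‖)
    (p : ℝ≥0∞) (hp : 1 ≤ p) :
    Filter.Tendsto (fun k : ℕ => (tau p (B ^ k)) ^ ((1 : ℝ) / k)) Filter.atTop
      (nhds (‖lam ⟨n - 1, by omega⟩‖)) := by
  have hroots' := roots_charpoly_map_transpose_mul_centering hroots hB hlam1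
  have hnonzero : ∀ {i : Fin n}, i ∈ Finset.univ.val.erase ⟨0, by omega⟩ → 0 < i.val :=
    fun hi => Nat.pos_of_ne_zero fun h0 =>
      (Finset.univ.nodup.mem_erase_iff.1 hi).1 (Fin.ext h0)
  have hlast : (⟨n - 1, by omega⟩ : Fin n) ∈ Finset.univ.val.erase ⟨0, by omega⟩ :=
    Finset.univ.nodup.mem_erase_iff.2 ⟨fun h => by simp [Fin.ext_iff] at h; omega,
      Finset.mem_univ_val _⟩
  have hrad : spectralRadius ℂ ((Bᵀ * centering n).map ((↑) : ℝ → ℂ)) =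
      ‖lam ⟨n - 1, by omega⟩‖₊ := by
    refine spectralRadius_eq_of_mem_roots_charpoly
      (hroots' ▸ Multiset.mem_cons_of_mem (Multiset.mem_map_of_mem lam hlast)) fun μ hμ => ?_
    rw [hroots'] at hμ
    obtain rfl | ⟨i, hi, rfl⟩ := Multiset.mem_cons.1 hμ |>.imp_right Multiset.mem_map.1
    · simp
    · exact hmono i _ (hnonzero hi) (Fin.le_def.2 (by simp; omega))
  exact tendsto_rpow_one_div_of_isTheta (tau_pow_isTheta hp hB) (fun _ => tau_nonneg hp _)
    (fun _ => norm_nonneg _) (tendsto_norm_pow_rpow_one_div_of_spectralRadius_eq _ hrad)
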